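/- arXiv:2603.25961 — 2 statements merged into one kernel-verified Lean document; each statement's English description precedes it below -/
import Mathlib

section
/- For every ε ≥ 0 and every real X ≥ 1, S_ε(X) = ∑_{ℓ ≤ X} μ²(ℓ) · φ_{1+ε}(ℓ)/ℓ^{2+2ε} · m_ℓ(X/ℓ; 1+ε)², where the sum runs over positive integers ℓ ≤ X. In particular S_ε(X) ≥ 0. -/
/-!
Selberg's diagonalisation. Since `μ(d) μ(e) / [d,e]^s = (d,e)^s · μ(d)/d^s · μ(e)/e^s` and
`(d,e)^s = ∑_{ℓ ∣ (d,e)} φ_s(ℓ)` (because `φ_s = μ ∗ n^s`), exchanging the order of summation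
turns `S_ε(X)` into `∑_ℓ φ_s(ℓ) (∑_{d ≤ X, ℓ ∣ d} μ(d)/d^s)²` with `s = 1 + ε`. Writing `d = ℓm`,
only `m` coprime to `ℓ` contribute, which factors the inner sum as `μ(ℓ)/ℓ^s · m_ℓ(X/ℓ; s)`.
Nonnegativity follows because `φ_s ≥ 0` for `s ≥ 0`.
-/

/-- `S_ε(X) = ∑_{d ≤ X} ∑_{e ≤ X} μ(d) μ(e) / lcm(d,e)^{1+ε}`. -/
noncomputable def Seps (ε X : ℝ) : ℝ :=
  ∑ d ∈ Finset.Icc 1 ⌊X⌋₊, ∑ e ∈ Finset.Icc 1 ⌊X⌋₊,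
    ((ArithmeticFunction.moebius d : ℝ) * (ArithmeticFunction.moebius e : ℝ)) /
      (Nat.lcm d e : ℝ) ^ (1 + ε)

/-- `m_q(X; s) = ∑_{ℓ ≤ X, gcd(ℓ,q)=1} μ(ℓ)/ℓ^s`. -/
noncomputable def mqs (q : ℕ) (X s : ℝ) : ℝ :=
  ∑ ℓ ∈ (Finset.Icc 1 ⌊X⌋₊).filter (fun ℓ => Nat.gcd ℓ q = 1),
    (ArithmeticFunction.moebius ℓ : ℝ) / (ℓ : ℝ) ^ s

/-- Generalised Euler function `φ_s(q) = q^s ∏_{p ∣ q} (1 - p^{-s})`. -/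
noncomputable def phis (s : ℝ) (q : ℕ) : ℝ :=
  (q : ℝ) ^ s * ∏ p ∈ q.primeFactors, (1 - 1 / (p : ℝ) ^ s)

open Finset ArithmeticFunction UniqueFactorizationMonoid
open scoped ArithmeticFunction.Moebius

theorem ArithmeticFunction.IsMultiplicative.sum_divisors_moebius_mul {R : Type*} [CommRing R]
    {f : ArithmeticFunction R} (hf : f.IsMultiplicative) {n : ℕ} (hn : n ≠ 0) :
    ∑ d ∈ n.divisors, (μ d : R) * f d = ∏ p ∈ n.primeFactors, (1 - f p) := by
  rw [← Nat.primeFactors_radical, hf.prodPrimeFactors_one_sub_of_squarefree f squarefree_radical]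
  refine (sum_subset (Nat.divisors_subset_of_dvd hn radical_dvd_self) fun d hdn hdr => ?_).symm
  have hd : ¬ Squarefree d := fun hd => hdr <| Nat.mem_divisors.2
    ⟨(dvd_radical_iff hd.isRadical hn).2 (Nat.dvd_of_mem_divisors hdn), radical_ne_zero⟩
  simp [moebius_eq_zero_of_not_squarefree hd]

noncomputable def invRpow (s : ℝ) : ArithmeticFunction ℝ :=
  ⟨fun d => if d = 0 then 0 else ((d : ℝ) ^ s)⁻¹, if_pos rfl⟩

theorem invRpow_apply (s : ℝ) {d : ℕ} (hd : d ≠ 0) : invRpow s d = ((d : ℝ) ^ s)⁻¹ :=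
  if_neg hd

theorem isMultiplicative_invRpow (s : ℝ) : (invRpow s).IsMultiplicative := by
  refine IsMultiplicative.iff_ne_zero.2 ⟨by simp [invRpow_apply], fun {m n} hm hn _ => ?_⟩
  rw [invRpow_apply s hm, invRpow_apply s hn, invRpow_apply s (mul_ne_zero hm hn), Nat.cast_mul,
    Real.mul_rpow m.cast_nonneg n.cast_nonneg, mul_inv]

theorem phis_eq_sum_divisors (s : ℝ) {n : ℕ} (hn : n ≠ 0) :
    phis s n = ∑ d ∈ n.divisors, (μ d : ℝ) * ((n / d : ℕ) : ℝ) ^ s := by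
  have hprod : ∏ p ∈ n.primeFactors, (1 - 1 / (p : ℝ) ^ s) =
      ∏ p ∈ n.primeFactors, (1 - invRpow s p) :=
    prod_congr rfl fun p hp => by
      rw [invRpow_apply s (Nat.prime_of_mem_primeFactors hp).ne_zero, one_div]
  rw [phis, hprod, ← (isMultiplicative_invRpow s).sum_divisors_moebius_mul hn, mul_sum]
  refine sum_congr rfl fun d hd => ?_
  have hd0 : d ≠ 0 := (Nat.pos_of_mem_divisors hd).ne'
  rw [Nat.cast_div (Nat.dvd_of_mem_divisors hd) (Nat.cast_ne_zero.2 hd0),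
    Real.div_rpow n.cast_nonneg d.cast_nonneg, invRpow_apply s hd0]
  ring

theorem sum_divisors_phis (s : ℝ) {n : ℕ} (hn : n ≠ 0) :
    ∑ ℓ ∈ n.divisors, phis s ℓ = (n : ℝ) ^ s := by
  refine (sum_eq_iff_sum_mul_moebius_eq (f := phis s) (g := fun n : ℕ => (n : ℝ) ^ s)).2
    (fun m hm => ?_) n (Nat.pos_of_ne_zero hn)
  rw [phis_eq_sum_divisors s hm.ne',
    Nat.sum_divisorsAntidiagonal fun a b => (μ a : ℝ) * (b : ℝ) ^ s]

theorem phis_nonneg {s : ℝ} (hs : 0 ≤ s) (q : ℕ) : 0 ≤ phis s q := by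
  refine mul_nonneg (Real.rpow_nonneg q.cast_nonneg s) (prod_nonneg fun p hp => ?_)
  have hp : 1 ≤ (p : ℝ) ^ s :=
    Real.one_le_rpow (Nat.one_le_cast.2 (Nat.prime_of_mem_primeFactors hp).one_le) hs
  exact sub_nonneg.2 (div_le_one_of_le₀ hp (by positivity))

theorem Icc_filter_dvd_eq_divisors {m N : ℕ} (hm : m ≠ 0) (hmN : m ≤ N) :
    {ℓ ∈ Icc 1 N | ℓ ∣ m} = m.divisors := by
  ext ℓ
  simp only [mem_filter, mem_Icc, Nat.mem_divisors]
  constructor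
  · rintro ⟨-, hℓ⟩
    exact ⟨hℓ, hm⟩
  · rintro ⟨hℓ, -⟩
    have hℓm := Nat.le_of_dvd (Nat.pos_of_ne_zero hm) hℓ
    exact ⟨⟨Nat.pos_of_dvd_of_pos hℓ (Nat.pos_of_ne_zero hm), by omega⟩, hℓ⟩

theorem Icc_filter_dvd_eq_image {ℓ N : ℕ} (hℓ : ℓ ≠ 0) :
    {d ∈ Icc 1 N | ℓ ∣ d} = (Icc 1 (N / ℓ)).image (ℓ * ·) := by
  ext d
  simp only [mem_filter, mem_Icc, mem_image, Nat.le_div_iff_mul_le (Nat.pos_of_ne_zero hℓ)]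
  constructor
  · rintro ⟨⟨hd, hdN⟩, m, rfl⟩
    exact ⟨m, ⟨Nat.pos_of_mul_pos_left hd, by linarith⟩, rfl⟩
  · rintro ⟨m, ⟨hm, hmN⟩, rfl⟩
    exact ⟨⟨Nat.mul_pos (Nat.pos_of_ne_zero hℓ) hm, by linarith⟩, dvd_mul_right ℓ m⟩

theorem rpow_gcd_mul_rpow_lcm (s : ℝ) (d e : ℕ) :
    (Nat.gcd d e : ℝ) ^ s * (Nat.lcm d e : ℝ) ^ s = (d : ℝ) ^ s * (e : ℝ) ^ s := by
  rw [← Real.mul_rpow (Nat.cast_nonneg _) (Nat.cast_nonneg _),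
    ← Real.mul_rpow (Nat.cast_nonneg _) (Nat.cast_nonneg _), ← Nat.cast_mul, ← Nat.cast_mul,
    Nat.gcd_mul_lcm]

theorem mul_div_lcm_rpow (s x y : ℝ) {d e : ℕ} (hd : d ≠ 0) (he : e ≠ 0) :
    x * y / (Nat.lcm d e : ℝ) ^ s =
      (Nat.gcd d e : ℝ) ^ s * (x / (d : ℝ) ^ s) * (y / (e : ℝ) ^ s) := by
  have hl : Nat.lcm d e ≠ 0 := Nat.lcm_ne_zero hd he
  field_simp
  linear_combination -(x * y) * rpow_gcd_mul_rpow_lcm s d e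

theorem sum_sum_rpow_gcd_mul (s : ℝ) (N : ℕ) (a : ℕ → ℝ) :
    ∑ d ∈ Icc 1 N, ∑ e ∈ Icc 1 N, (Nat.gcd d e : ℝ) ^ s * a d * a e =
      ∑ ℓ ∈ Icc 1 N, phis s ℓ * (∑ d ∈ Icc 1 N with ℓ ∣ d, a d) ^ 2 := by
  have hgcd : ∀ d ∈ Icc 1 N, ∀ e, (Nat.gcd d e : ℝ) ^ s =
      ∑ ℓ ∈ Icc 1 N, if ℓ ∣ d ∧ ℓ ∣ e then phis s ℓ else 0 := by
    intro d hd e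
    obtain ⟨hd1, hdN⟩ := mem_Icc.1 hd
    have hg : Nat.gcd d e ≠ 0 := Nat.gcd_ne_zero_left (by omega)
    rw [← sum_filter, ← sum_divisors_phis s hg,
      ← Icc_filter_dvd_eq_divisors hg ((Nat.gcd_le_left e hd1).trans hdN)]
    simp_rw [Nat.dvd_gcd_iff]
  calc _ = ∑ d ∈ Icc 1 N, ∑ e ∈ Icc 1 N, ∑ ℓ ∈ Icc 1 N,
        phis s ℓ * ((if ℓ ∣ d then a d else 0) * (if ℓ ∣ e then a e else 0)) := by
        refine sum_congr rfl fun d hd => sum_congr rfl fun e _ => ?_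
        rw [hgcd d hd e, sum_mul, sum_mul]
        refine sum_congr rfl fun ℓ _ => ?_
        by_cases hℓd : ℓ ∣ d <;> by_cases hℓe : ℓ ∣ e <;> simp [hℓd, hℓe, mul_assoc]
    _ = _ := by
        simp_rw [sum_filter, sq, sum_mul_sum, mul_sum]
        rw [sum_congr rfl fun d _ => sum_comm, sum_comm]

theorem sum_moebius_div_rpow_of_dvd (s X : ℝ) {ℓ : ℕ} (hℓ : ℓ ≠ 0) :
    ∑ d ∈ Icc 1 ⌊X⌋₊ with ℓ ∣ d, (μ d : ℝ) / (d : ℝ) ^ s =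
      (μ ℓ : ℝ) / (ℓ : ℝ) ^ s * mqs ℓ (X / ℓ) s := by
  rw [mqs, Nat.floor_div_natCast, Icc_filter_dvd_eq_image hℓ,
    sum_image fun m _ n _ h => Nat.eq_of_mul_eq_mul_left (Nat.pos_of_ne_zero hℓ) h, sum_filter,
    mul_sum]
  refine sum_congr rfl fun m _ => ?_
  split_ifs with hco
  · rw [isMultiplicative_moebius.map_mul_of_coprime (Nat.Coprime.symm hco), Nat.cast_mul,
      Real.mul_rpow ℓ.cast_nonneg m.cast_nonneg, Int.cast_mul, mul_div_mul_comm]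
  · have : ¬ Squarefree (ℓ * m) := fun h => hco (Nat.squarefree_mul_iff.1 h).1.symm
    simp [moebius_eq_zero_of_not_squarefree this]

theorem Seps_eq_sum_sum_rpow_gcd (ε X : ℝ) :
    Seps ε X = ∑ d ∈ Icc 1 ⌊X⌋₊, ∑ e ∈ Icc 1 ⌊X⌋₊, (Nat.gcd d e : ℝ) ^ (1 + ε) *
      ((μ d : ℝ) / (d : ℝ) ^ (1 + ε)) * ((μ e : ℝ) / (e : ℝ) ^ (1 + ε)) :=
  sum_congr rfl fun _ hd => sum_congr rfl fun _ he =>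
    mul_div_lcm_rpow _ _ _ (Nat.one_le_iff_ne_zero.1 (mem_Icc.1 hd).1)
      (Nat.one_le_iff_ne_zero.1 (mem_Icc.1 he).1)

theorem Seps_diagonal_identity_general (ε X : ℝ) (hε : 0 ≤ ε) :
    Seps ε X =
      ∑ ℓ ∈ Finset.Icc 1 ⌊X⌋₊,
        (ArithmeticFunction.moebius ℓ : ℝ) ^ 2 * phis (1 + ε) ℓ / (ℓ : ℝ) ^ (2 + 2 * ε) *
          (mqs ℓ (X / ℓ) (1 + ε)) ^ 2 ∧
    0 ≤ Seps ε X := by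
  have identity : Seps ε X = ∑ ℓ ∈ Icc 1 ⌊X⌋₊,
      (μ ℓ : ℝ) ^ 2 * phis (1 + ε) ℓ / (ℓ : ℝ) ^ (2 + 2 * ε) * (mqs ℓ (X / ℓ) (1 + ε)) ^ 2 := by
    rw [Seps_eq_sum_sum_rpow_gcd, sum_sum_rpow_gcd_mul]
    refine sum_congr rfl fun ℓ hℓ => ?_
    have hℓ : ℓ ≠ 0 := Nat.one_le_iff_ne_zero.1 (mem_Icc.1 hℓ).1
    have hsq : (ℓ : ℝ) ^ (2 + 2 * ε) = ((ℓ : ℝ) ^ (1 + ε)) ^ 2 := by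
      rw [← Real.rpow_mul_natCast ℓ.cast_nonneg]
      ring_nf
    rw [sum_moebius_div_rpow_of_dvd _ _ hℓ, hsq]
    ring
  refine ⟨identity, identity ▸ sum_nonneg fun ℓ _ => ?_⟩
  have hφ := phis_nonneg (by linarith : (0 : ℝ) ≤ 1 + ε) ℓ
  positivity

theorem Seps_diagonal_identity (ε X : ℝ) (hε : 0 ≤ ε) (hX : 1 ≤ X) :
    Seps ε X =
      ∑ ℓ ∈ Finset.Icc 1 ⌊X⌋₊,
        (ArithmeticFunction.moebius ℓ : ℝ) ^ 2 * phis (1 + ε) ℓ / (ℓ : ℝ) ^ (2 + 2 * ε) *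
          (mqs ℓ (X / ℓ) (1 + ε)) ^ 2 ∧
    0 ≤ Seps ε X :=
  Seps_diagonal_identity_general ε X hε
end

section
/- For every real ε > 0 and every real X > 0, ζ(1+ε)·S_ε(X) = ∑_{n=1}^{∞} (1/n^{1+ε})·( ∑_{d | n, d ≤ X} μ(d) )², where ζ is the Riemann zeta function, the inner sum runs over positive divisors d of n with d ≤ X, and the outer series converges. In particular S_ε(X) ≥ 0. -/
/-- The Riemann zeta function for real `s > 1`, as the series `∑ n ≥ 1, n^{-s}`. -/
noncomputable def zetaR (s : ℝ) : ℝ := ∑' n : ℕ, 1 / ((n : ℝ) + 1) ^ s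

open Finset ArithmeticFunction

variable {s : ℝ}

theorem hasSum_ite_dvd_one_div_rpow (hs : 1 < s) {k : ℕ} (hk : k ≠ 0) :
    HasSum (fun n : ℕ => if k ∣ n then 1 / (n : ℝ) ^ s else 0)
      (1 / (k : ℝ) ^ s * ∑' n : ℕ, 1 / (n : ℝ) ^ s) := by
  rw [← (mul_right_injective₀ hk).hasSum_iff]
  · have hmul (m : ℕ) : 1 / ((k * m : ℕ) : ℝ) ^ s = 1 / (k : ℝ) ^ s * (1 / (m : ℝ) ^ s) := by
      rw [Nat.cast_mul, Real.mul_rpow (Nat.cast_nonneg k) (Nat.cast_nonneg m), one_div_mul_one_div]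
    simpa only [Function.comp_def, dvd_mul_right, if_true, hmul] using
      (Real.summable_one_div_nat_rpow.2 hs).hasSum.mul_left (1 / (k : ℝ) ^ s)
  · rintro n hn
    rw [if_neg fun ⟨m, hm⟩ => hn ⟨m, hm.symm⟩]

theorem sq_sum_filter_dvd (D : Finset ℕ) (a : ℕ → ℝ) (n : ℕ) :
    (∑ d ∈ D with d ∣ n, a d) ^ 2 =
      ∑ d ∈ D, ∑ e ∈ D, if d.lcm e ∣ n then a d * a e else 0 := by
  simp_rw [sq, sum_filter, sum_mul_sum, Nat.lcm_dvd_iff, ite_and, ite_mul, mul_ite, zero_mul,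
    mul_zero, ite_self]

theorem hasSum_one_div_rpow_mul_sq_sum_filter_dvd (hs : 1 < s) {D : Finset ℕ} (hD : 0 ∉ D)
    (a : ℕ → ℝ) :
    HasSum (fun n : ℕ => 1 / (n : ℝ) ^ s * (∑ d ∈ D with d ∣ n, a d) ^ 2)
      ((∑' n : ℕ, 1 / (n : ℝ) ^ s) *
        ∑ d ∈ D, ∑ e ∈ D, a d * a e / (d.lcm e : ℝ) ^ s) := by
  simp_rw [sq_sum_filter_dvd, mul_sum]
  refine hasSum_sum fun d hd => hasSum_sum fun e he => ?_
  have hlcm : d.lcm e ≠ 0 := Nat.lcm_ne_zero (ne_of_mem_of_not_mem hd hD)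
    (ne_of_mem_of_not_mem he hD)
  have hterm : (fun n : ℕ => 1 / (n : ℝ) ^ s * if d.lcm e ∣ n then a d * a e else 0) =
      fun n => a d * a e * if d.lcm e ∣ n then 1 / (n : ℝ) ^ s else 0 := by
    funext n
    split_ifs <;> ring
  rw [hterm, show (∑' n : ℕ, 1 / (n : ℝ) ^ s) * (a d * a e / (d.lcm e : ℝ) ^ s) =
      a d * a e * (1 / (d.lcm e : ℝ) ^ s * ∑' n : ℕ, 1 / (n : ℝ) ^ s) by ring]
  exact (hasSum_ite_dvd_one_div_rpow hs hlcm).mul_left (a d * a e)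

theorem tsum_one_div_nat_rpow_eq_zetaR (hs : 1 < s) :
    ∑' n : ℕ, 1 / (n : ℝ) ^ s = zetaR s := by
  rw [(Real.summable_one_div_nat_rpow.2 hs).tsum_eq_zero_add, zetaR]
  simp [Real.zero_rpow (by linarith : s ≠ 0)]

theorem zetaR_pos (hs : 1 < s) : 0 < zetaR s := by
  rw [← tsum_one_div_nat_rpow_eq_zetaR hs]
  exact (Real.summable_one_div_nat_rpow.2 hs).tsum_pos (fun n => by positivity) 1 (by norm_num)

theorem Nat.divisors_filter_cast_le (X : ℝ) {n : ℕ} (hn : n ≠ 0) :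
    n.divisors.filter (fun d : ℕ => (d : ℝ) ≤ X) = (Icc 1 ⌊X⌋₊).filter (· ∣ n) := by
  ext d
  simp only [mem_filter, Nat.mem_divisors, mem_Icc]
  constructor
  · rintro ⟨⟨hd, -⟩, hdX⟩
    have hd0 : d ≠ 0 := ne_zero_of_dvd_ne_zero hn hd
    exact ⟨⟨Nat.one_le_iff_ne_zero.2 hd0, (Nat.le_floor_iff' hd0).2 hdX⟩, hd⟩
  · rintro ⟨⟨hd1, hdX⟩, hd⟩
    exact ⟨⟨hd, hn⟩, (Nat.le_floor_iff' (Nat.one_le_iff_ne_zero.1 hd1)).1 hdX⟩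

theorem parseval_identity_general (ε X : ℝ) (hε : 0 < ε) :
    Summable (fun n : ℕ =>
      1 / ((n : ℝ) + 1) ^ (1 + ε) *
        (∑ d ∈ (n + 1).divisors.filter (fun d : ℕ => (d : ℝ) ≤ X),
          (ArithmeticFunction.moebius d : ℝ)) ^ 2) ∧
    zetaR (1 + ε) * Seps ε X =
      ∑' n : ℕ,
        1 / ((n : ℝ) + 1) ^ (1 + ε) *
          (∑ d ∈ (n + 1).divisors.filter (fun d : ℕ => (d : ℝ) ≤ X),
            (ArithmeticFunction.moebius d : ℝ)) ^ 2 ∧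
    0 ≤ Seps ε X := by
  have hs : 1 < 1 + ε := by linarith
  have hsum := hasSum_one_div_rpow_mul_sq_sum_filter_dvd hs
    (by simp : 0 ∉ Icc 1 ⌊X⌋₊) (fun d => (moebius d : ℝ))
  rw [tsum_one_div_nat_rpow_eq_zetaR hs, ← hasSum_nat_add_iff' 1] at hsum
  simp only [range_one, sum_singleton, Nat.cast_zero, Real.zero_rpow (by linarith : 1 + ε ≠ 0),
    div_zero, zero_mul, sub_zero, Nat.cast_add_one,
    ← Nat.divisors_filter_cast_le X (Nat.succ_ne_zero _)] at hsum
  refine ⟨hsum.summable, hsum.tsum_eq.symm, nonneg_of_mul_nonneg_right ?_ (zetaR_pos hs)⟩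
  exact hsum.nonneg fun n => by positivity

theorem parseval_identity (ε X : ℝ) (hε : 0 < ε) (hX : 0 < X) :
    Summable (fun n : ℕ =>
      1 / ((n : ℝ) + 1) ^ (1 + ε) *
        (∑ d ∈ (n + 1).divisors.filter (fun d : ℕ => (d : ℝ) ≤ X),
          (ArithmeticFunction.moebius d : ℝ)) ^ 2) ∧
    zetaR (1 + ε) * Seps ε X =
      ∑' n : ℕ,
        1 / ((n : ℝ) + 1) ^ (1 + ε) *
          (∑ d ∈ (n + 1).divisors.filter (fun d : ℕ => (d : ℝ) ≤ X),
            (ArithmeticFunction.moebius d : ℝ)) ^ 2 ∧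
    0 ≤ Seps ε X :=
  parseval_identity_general ε X hε
end
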